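/- arXiv:1307.6140 — 3 statements merged into one kernel-verified Lean document; each statement's English description precedes it below -/
import Mathlib

section
/- Let k₁,u₀,u₁ ∈ ℂ∖{0} and let V₀,V₁,V̌₀,V̌₁ ∈ A satisfy the relations of the confluent Cherednik algebra H_V: V₀²+V₀=0, (V₁−k₁)(V₁+k₁⁻¹)=0, V̌₀²+u₀⁻¹V̌₀=0, (V̌₁−u₁)(V̌₁+u₁⁻¹)=0, t·V̌₁V₁V₀ = V̌₀+u₀⁻¹, t·V̌₀V̌₁V₁ = V₀+1. Define T := V̌₁, T' := V̌₁−u₁+u₁⁻¹ (the two-sided inverse of T), X := (V₁+k₁⁻¹−k₁)(V̌₁+u₁⁻¹−u₁), W := V̌₁V₁, Y := V̌₁V₀, and Z := (V₀+1)(V̌₁+u₁⁻¹−u₁). Then the Lusztig–Demazure-type relations of H_V hold: WX = XW = 1; ZY = YZ = 0; XT = T'W + k₁⁻¹ − k₁; ZT = T'Y + 1; (T−u₁)(T+u₁⁻¹) = 0; and YX = q·T²XY + q·(k₁−k₁⁻¹)·TY − TX − t·u₀⁻¹·T. -/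
/-!
The quadratic relations of `V₁` and `V̌₁` are Hecke relations, so both are units whose inverses
`V₁ + k₁⁻¹ - k₁` and `V̌₁ + u₁⁻¹ - u₁ = T'` are affine in them. Hence `W = V̌₁V₁` is a unit with
inverse `X`, and all relations but the last are unit cancellations together with `V₀(V₀ + 1) = 0`.
For the last one, eliminating `V̌₀` between the two mixed relations gives
`q W V₀ W - t u₀⁻¹ W = V₀ + 1`; multiplying by `X` on the right and by `T` on the left expresses
`YX = T V₀ X` through `T W V₀`, which `XT = V₁⁻¹` identifies with `T²XY` up to a multiple of `TY`.
-/

section Hecke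

variable {R A : Type*} [Field R] [Ring A] [Algebra R A]

theorem sub_smul_one_mul_add_inv_smul_one (a : A) {c : R} (hc : c ≠ 0) :
    (a - c • 1) * (a + c⁻¹ • 1) = a * (a + (c⁻¹ - c) • 1) - 1 := by
  simp only [mul_add, sub_mul, smul_mul_assoc, mul_smul_comm, mul_one, one_mul]
  match_scalars <;> simp [hc, sub_eq_add_neg, add_comm]

theorem add_smul_one_mul_self (a : A) (r : R) : (a + r • 1) * a = a * (a + r • 1) := by
  simp only [add_mul, mul_add, smul_mul_assoc, mul_smul_comm, one_mul, mul_one]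

theorem exists_unit_of_hecke {a : A} {c : R} (hc : c ≠ 0)
    (h : (a - c • 1) * (a + c⁻¹ • 1) = 0) :
    ∃ u : Aˣ, ↑u = a ∧ ↑u⁻¹ = a + (c⁻¹ - c) • 1 := by
  rw [sub_smul_one_mul_add_inv_smul_one a hc, sub_eq_zero] at h
  exact ⟨⟨a, _, h, (add_smul_one_mul_self a _).trans h⟩, rfl, rfl⟩

end Hecke

theorem mul_inv_eq_of_smul_mul_eq {R A : Type*} [CommRing R] [Ring A] [Algebra R A]
    {t s : R} {w : Aˣ} {a b : A} (hab : t • (↑w * a) = b + s • 1) (hba : t • (b * ↑w) = a + 1) :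
    a * ↑w⁻¹ = t ^ 2 • (↑w * a) - (t * s) • 1 - ↑w⁻¹ := by
  have hb : b = t • (↑w * a) - s • 1 := eq_sub_of_add_eq hab.symm
  have hquad : t ^ 2 • (↑w * a * ↑w) - (t * s) • ↑w = a + 1 := by
    rw [← hba, hb]
    simp only [sub_mul, smul_mul_assoc, one_mul, smul_sub, smul_smul, pow_two]
  rw [eq_sub_iff_add_eq, ← add_one_mul, ← hquad, sub_mul, smul_mul_assoc, smul_mul_assoc,
    Units.mul_inv_cancel_right, Units.mul_inv]

theorem confluent_HV_lusztig_demazure_general {A : Type*} [Ring A] [Algebra ℂ A]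
    (t q k₁ u₀ u₁ : ℂ) (hq : q = t ^ 2)
    (hk₁ : k₁ ≠ 0) (hu₁ : u₁ ≠ 0)
    (V₀ V₁ Vc₀ Vc₁ : A)
    (r₀ : V₀ * V₀ + V₀ = 0)
    (r₁ : (V₁ - k₁ • 1) * (V₁ + k₁⁻¹ • 1) = 0)
    (rc₁ : (Vc₁ - u₁ • 1) * (Vc₁ + u₁⁻¹ • 1) = 0)
    (r5 : t • (Vc₁ * V₁ * V₀) = Vc₀ + u₀⁻¹ • 1)
    (r6 : t • (Vc₀ * Vc₁ * V₁) = V₀ + 1)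
    (T T' X W Y Z : A)
    (hT : T = Vc₁)
    (hT' : T' = Vc₁ - (u₁ - u₁⁻¹) • 1)
    (hX : X = (V₁ + (k₁⁻¹ - k₁) • 1) * (Vc₁ + (u₁⁻¹ - u₁) • 1))
    (hW : W = Vc₁ * V₁)
    (hY : Y = Vc₁ * V₀)
    (hZ : Z = (V₀ + 1) * (Vc₁ + (u₁⁻¹ - u₁) • 1)) :
    W * X = 1 ∧ X * W = 1 ∧
    Z * Y = 0 ∧ Y * Z = 0 ∧
    X * T = T' * W + (k₁⁻¹ - k₁) • (1 : A) ∧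
    Z * T = T' * Y + 1 ∧
    (T - u₁ • 1) * (T + u₁⁻¹ • 1) = 0 ∧
    Y * X = q • (T ^ 2 * X * Y) + (q * (k₁ - k₁⁻¹)) • (T * Y)
        - T * X - (t * u₀⁻¹) • T := by
  obtain ⟨τ, rfl, hτ⟩ := exists_unit_of_hecke hu₁ rc₁
  obtain ⟨ν, rfl, hν⟩ := exists_unit_of_hecke hk₁ r₁
  replace hX : X = ↑(τ * ν)⁻¹ := by rw [hX, ← hτ, ← hν, mul_inv_rev, Units.val_mul]
  replace hT' : T' = ↑τ⁻¹ := by rw [hT', hτ]; module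
  rw [← hτ] at hZ
  rw [mul_assoc Vc₀] at r6
  rw [← Units.val_mul] at hW r5 r6
  subst hT hT' hX hW hY hZ hq
  have hV₀ : (V₀ + 1) * V₀ = 0 := by rwa [add_mul, one_mul]
  have hV₀' : V₀ * (V₀ + 1) = 0 := by rwa [mul_add, mul_one]
  refine ⟨Units.mul_inv _, Units.inv_mul _, ?_, ?_, ?_, ?_, rc₁, ?_⟩
  · rw [mul_assoc, Units.inv_mul_cancel_left, hV₀]
  · rw [mul_assoc, ← mul_assoc V₀, hV₀', zero_mul, mul_zero]
  · rw [mul_inv_rev, Units.val_mul, Units.inv_mul_cancel_right, Units.val_mul,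
      Units.inv_mul_cancel_left, hν]
  · rw [Units.inv_mul_cancel_right, Units.inv_mul_cancel_left]
  · have hT2XY : (↑τ : A) ^ 2 * ↑(τ * ν)⁻¹ * (↑τ * V₀)
        = ↑τ * (↑(τ * ν) * V₀) + (k₁⁻¹ - k₁) • (↑τ * (↑τ * V₀)) := by
      simp only [mul_inv_rev, Units.val_mul, pow_two, mul_assoc, Units.inv_mul_cancel_left, hν,
        add_mul, mul_add, smul_mul_assoc, one_mul, mul_smul_comm]
    rw [hT2XY, mul_assoc, mul_inv_eq_of_smul_mul_eq r5 r6]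
    simp only [mul_sub, mul_smul_comm, mul_one]
    module

/-- Lusztig–Demazure type presentation of the confluent Cherednik algebra `H_V`:
the elements `T, T', X, W, Y, Z` built from the generators satisfy the
Lusztig–Demazure relations. -/
theorem confluent_HV_lusztig_demazure {A : Type*} [Ring A] [Algebra ℂ A]
    (t q k₁ u₀ u₁ : ℂ) (ht : t ≠ 0) (hq : q = t ^ 2)
    (hk₁ : k₁ ≠ 0) (hu₀ : u₀ ≠ 0) (hu₁ : u₁ ≠ 0)
    (V₀ V₁ Vc₀ Vc₁ : A)
    (r₀ : V₀ * V₀ + V₀ = 0)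
    (r₁ : (V₁ - k₁ • 1) * (V₁ + k₁⁻¹ • 1) = 0)
    (rc₀ : Vc₀ * Vc₀ + u₀⁻¹ • Vc₀ = 0)
    (rc₁ : (Vc₁ - u₁ • 1) * (Vc₁ + u₁⁻¹ • 1) = 0)
    (r5 : t • (Vc₁ * V₁ * V₀) = Vc₀ + u₀⁻¹ • 1)
    (r6 : t • (Vc₀ * Vc₁ * V₁) = V₀ + 1)
    (T T' X W Y Z : A)
    (hT : T = Vc₁)
    (hT' : T' = Vc₁ - (u₁ - u₁⁻¹) • 1)
    (hX : X = (V₁ + (k₁⁻¹ - k₁) • 1) * (Vc₁ + (u₁⁻¹ - u₁) • 1))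
    (hW : W = Vc₁ * V₁)
    (hY : Y = Vc₁ * V₀)
    (hZ : Z = (V₀ + 1) * (Vc₁ + (u₁⁻¹ - u₁) • 1)) :
    W * X = 1 ∧ X * W = 1 ∧
    Z * Y = 0 ∧ Y * Z = 0 ∧
    X * T = T' * W + (k₁⁻¹ - k₁) • (1 : A) ∧
    Z * T = T' * Y + 1 ∧
    (T - u₁ • 1) * (T + u₁⁻¹ • 1) = 0 ∧
    Y * X = q • (T ^ 2 * X * Y) + (q * (k₁ - k₁⁻¹)) • (T * Y)
        - T * X - (t * u₀⁻¹) • T :=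
  confluent_HV_lusztig_demazure_general t q k₁ u₀ u₁ hq hk₁ hu₁ V₀ V₁ Vc₀ Vc₁ r₀ r₁ rc₁ r5 r6 T T' X
    W Y Z hT hT' hX hW hY hZ
end

section
/- Let q,a ∈ ℂ with q ≠ 0. On the space of all functions f : ℂ∖{0} → ℂ define the linear operators (K₁f)(x) := x·f(x) and (K₀f)(x) := x⁻¹·((1+a)·f(x) + (x−1)·f(x/q) − a·f(qx)). Then, as operators on this space, (q+q⁻¹)·K₁K₀K₁ − K₁²K₀ − K₀K₁² = B·K₁ and (q+q⁻¹)·K₀K₁K₀ − K₀²K₁ − K₁K₀² = B·K₀ + D₁·Id, where B := (q−1)²(1+a)/q and D₁ := −(q−1)²(q+1)·a/q. (These are the defining relations of the confluent Zhedanov algebra Z_II, with C₀ = 0 and D₀ = 0; in particular K₀ and K₁ give a representation of Z_II, which restricts to the space of polynomials.) -/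
/-!
Write `T` for the dilation `(T f)(x) = f (q x)`, so that `T K₁ = q K₁ T` and
`K₀ = x⁻¹ ((1 + a) + (x - 1) T⁻¹ - a T)`. In the first relation a term `x ^ m T ^ k` of `K₀`
contributes with the factor `(q + q⁻¹) q ^ k - 1 - q ^ (2 k) = -(q ^ k - q) (q ^ k - q⁻¹)`,
which vanishes for `k = ±1` and is `(q - 1) ^ 2 / q` for `k = 0`; the second relation is the
same kind of bookkeeping with one more factor `K₀`. Pointwise, both are rational identities in
`x`, `q`, `a` and the values of `f` on the orbit `q ^ ℤ x`, once the points `q (x / q)` and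
`q x / q` of that orbit are identified with `x`.
-/

section PuncturedField

variable {K : Type*} [Field K] {q : K}

theorem Subtype.mk_mul_div_cancel_of_ne_zero (hq : q ≠ 0) (x : {x : K // x ≠ 0})
    (h : q * (x.1 / q) ≠ 0) : (⟨q * (x.1 / q), h⟩ : {x : K // x ≠ 0}) = x :=
  Subtype.ext (mul_div_cancel₀ _ hq)

theorem Subtype.mk_mul_div_cancel_left_of_ne_zero (hq : q ≠ 0) (x : {x : K // x ≠ 0})
    (h : q * x.1 / q ≠ 0) : (⟨q * x.1 / q, h⟩ : {x : K // x ≠ 0}) = x :=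
  Subtype.ext (mul_div_cancel_left₀ _ hq)

end PuncturedField

/-- The operators `K₀, K₁` of the basic representation of the confluent
Zhedanov algebra `Z_II` on functions on `ℂ∖{0}` satisfy the defining relations
of `Z_II` (with `C₀ = 0`, `D₀ = 0`). -/
theorem zhedanov_ZII_basic_representation (q a : ℂ) (hq : q ≠ 0)
    (B D₁ : ℂ)
    (hB : B = (q - 1) ^ 2 * (1 + a) / q)
    (hD₁ : D₁ = -((q - 1) ^ 2 * (q + 1) * a / q))
    (K₁ K₀ : ({x : ℂ // x ≠ 0} → ℂ) → ({x : ℂ // x ≠ 0} → ℂ))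
    (hK₁ : ∀ f x, K₁ f x = x.1 * f x)
    (hK₀ : ∀ f x, K₀ f x = (x.1)⁻¹ * ((1 + a) * f x
        + (x.1 - 1) * f ⟨x.1 / q, div_ne_zero x.2 hq⟩
        - a * f ⟨q * x.1, mul_ne_zero hq x.2⟩)) :
    (∀ f x, (q + q⁻¹) * K₁ (K₀ (K₁ f)) x - K₁ (K₁ (K₀ f)) x - K₀ (K₁ (K₁ f)) x
        = B * K₁ f x) ∧
    (∀ f x, (q + q⁻¹) * K₀ (K₁ (K₀ f)) x - K₀ (K₀ (K₁ f)) x - K₁ (K₀ (K₀ f)) x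
        = B * K₀ f x + D₁ * f x) := by
  constructor
  · intro f x
    have hx := x.2
    simp only [hK₁, hK₀, hB]
    field_simp
    ring
  · intro f x
    have hx := x.2
    simp only [hK₁, hK₀, hB, hD₁, Subtype.mk_mul_div_cancel_of_ne_zero hq,
      Subtype.mk_mul_div_cancel_left_of_ne_zero hq]
    field_simp
    ring
end

section
/- Fix n ∈ ℕ and q,a ∈ ℂ with q ≠ 0, q^j ≠ 1 for 1 ≤ j ≤ n, and a·q^j ≠ 1 for 1 ≤ j ≤ n. Define the little q-Laguerre (Wall) polynomial p_n(x) := Σ_{k=0}^{n} [(q^{−n};q)_k / ((a q;q)_k·(q;q)_k)]·(q x)^k. Then p_n is an eigenfunction of the operator K₀ of the basic representation of the confluent Zhedanov algebra Z_II with eigenvalue q^{−n}: for every x ∈ ℂ∖{0}, x⁻¹·((1+a)·p_n(x) + (x−1)·p_n(x/q) − a·p_n(q x)) = q^{−n}·p_n(x). -/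
open Finset

/-! Write `p x = ∑ c k (q x)ᵏ`. Multiplied by `x`, the difference of the two sides of the
eigenvalue equation is `∑ c k ((1 - q⁻ⁿ qᵏ) xᵏ⁺¹ - (1 - qᵏ)(1 - a qᵏ) xᵏ)`. The ratio of
consecutive q-Pochhammer quotients, `c (k+1) (1 - qᵏ⁺¹)(1 - a qᵏ⁺¹) = c k (1 - q⁻ⁿ qᵏ)`, makes the
sum telescope, and it vanishes because `1 - q⁻ⁿ qⁿ = 0` and `1 - q⁰ = 0`. -/

/-- The q-Pochhammer symbol `(z; q)_k`. -/
noncomputable def qPoch (z q : ℂ) (k : ℕ) : ℂ := ∏ j ∈ Finset.range k, (1 - z * q ^ j)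

lemma qPoch_succ (z q : ℂ) (k : ℕ) :
    qPoch z q (k + 1) = qPoch z q k * (1 - z * q ^ k) :=
  prod_range_succ _ _

lemma qPoch_ne_zero {z q : ℂ} {k : ℕ} (h : ∀ j < k, z * q ^ j ≠ 1) : qPoch z q k ≠ 0 :=
  prod_ne_zero_iff.mpr fun j hj => sub_ne_zero.mpr (h j (mem_range.mp hj)).symm

lemma qPoch_div_mul_sub (z b q : ℂ) (k : ℕ) (hb : qPoch b q (k + 1) ≠ 0)
    (hq : qPoch q q (k + 1) ≠ 0) :
    qPoch z q k / (qPoch b q k * qPoch q q k) * (1 - z * q ^ k) =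
      qPoch z q (k + 1) / (qPoch b q (k + 1) * qPoch q q (k + 1)) *
        ((1 - b * q ^ k) * (1 - q * q ^ k)) := by
  rw [qPoch_succ] at hb hq
  rw [qPoch_succ, qPoch_succ, qPoch_succ, div_mul_eq_mul_div, div_mul_eq_mul_div,
    div_eq_div_iff (mul_ne_zero (left_ne_zero_of_mul hb) (left_ne_zero_of_mul hq))
      (mul_ne_zero hb hq)]
  ring

lemma sum_range_mul_pow_telescope {R : Type*} [CommRing R] (c u w : ℕ → R) (n : ℕ) (x : R)
    (hrec : ∀ k < n, c k * u k = c (k + 1) * w (k + 1)) (hw : w 0 = 0) (hu : u n = 0) :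
    ∑ k ∈ range (n + 1), c k * (u k * x ^ (k + 1) - w k * x ^ k) = 0 := by
  simp only [mul_sub, sum_sub_distrib]
  rw [sum_range_succ, sum_range_succ', hu, hw]
  simp only [mul_zero, zero_mul, add_zero]
  rw [sub_eq_zero]
  refine sum_congr rfl fun k hk => ?_
  rw [← mul_assoc, hrec k (mem_range.mp hk), mul_assoc]

/-- The little q-Laguerre (Wall) polynomials are eigenfunctions of the operator
`K₀` of the basic representation of the confluent Zhedanov algebra `Z_II`,
with eigenvalue `q⁻ⁿ`. -/
theorem littleQLaguerre_eigenfunction (n : ℕ) (q a : ℂ) (hq : q ≠ 0)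
    (hqj : ∀ j : ℕ, 1 ≤ j → j ≤ n → q ^ j ≠ 1)
    (haj : ∀ j : ℕ, 1 ≤ j → j ≤ n → a * q ^ j ≠ 1)
    (p : ℂ → ℂ)
    (hp : ∀ x : ℂ, p x = ∑ k ∈ Finset.range (n + 1),
        qPoch (q ^ n)⁻¹ q k / (qPoch (a * q) q k * qPoch q q k) * (q * x) ^ k) :
    ∀ x : ℂ, x ≠ 0 →
      x⁻¹ * ((1 + a) * p x + (x - 1) * p (x / q) - a * p (q * x))
        = (q ^ n)⁻¹ * p x := by
  intro x hx
  set c : ℕ → ℂ := fun k => qPoch (q ^ n)⁻¹ q k / (qPoch (a * q) q k * qPoch q q k)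
  have hrec : ∀ k < n, c k * (1 - (q ^ n)⁻¹ * q ^ k) =
      c (k + 1) * ((1 - q ^ (k + 1)) * (1 - a * q ^ (k + 1))) := fun k hk => by
    rw [qPoch_div_mul_sub _ _ _ _
      (qPoch_ne_zero fun j hj => by rw [mul_assoc, ← pow_succ']; exact haj _ (by omega) (by omega))
      (qPoch_ne_zero fun j hj => by rw [← pow_succ']; exact hqj _ (by omega) (by omega))]
    ring
  have htel := sum_range_mul_pow_telescope c (fun k => 1 - (q ^ n)⁻¹ * q ^ k)
    (fun k => (1 - q ^ k) * (1 - a * q ^ k)) n x hrec (by simp)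
    (by simp [inv_mul_cancel₀ (pow_ne_zero n hq)])
  rw [hp, hp, hp, mul_div_cancel₀ x hq, inv_mul_eq_iff_eq_mul₀ hx, ← sub_eq_zero, ← htel]
  simp only [mul_sum, ← sum_sub_distrib, ← sum_add_distrib]
  refine sum_congr rfl fun k _ => ?_
  ring
end
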